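/- arXiv:1704.08926 — 10 statements merged into one kernel-verified Lean document; each statement's English description precedes it below -/
import Mathlib

section
/- Let Λ be a nonempty closed subset of E, let m ≥ 1 be an integer and let c ∈ [0,1). Suppose the sequence (x_k)_{k∈ℕ} in Λ is linearly extendible on Λ with frequency m and rate c, witnessed by an extension sequence (z_k)_{k∈ℕ}. Then there exists a point x̃ ∈ Λ such that ‖x_k − x̃‖ ≤ γ·c^k for all k ∈ ℕ, where γ = m‖z_1 − z_0‖/(1 − c); in particular (x_k) converges R-linearly to x̃ with rate c. -/
/-!
The step lengths `dist (z (k + 1)) (z k)` are antitone and shrink by the factor `c` from one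
multiple of `m` to the next, so each of the `m` steps between `z (m * k)` and `z (m * (k + 1))`
is at most `c ^ k * dist (z 1) (z 0)`. Hence `x k = z (m * k)` moves by at most
`m * dist (z 1) (z 0) * c ^ k`, a geometric bound that makes `x` Cauchy with the stated tail
estimate; the limit lies in `Λ` because `Λ` is closed.
-/

open Filter Topology

lemma le_pow_mul_of_mul_succ_le {f : ℕ → ℝ} {m : ℕ} {c : ℝ} (hc : 0 ≤ c)
    (h : ∀ k, f (m * (k + 1)) ≤ c * f (m * k)) (k : ℕ) : f (m * k) ≤ c ^ k * f 0 := by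
  induction k with
  | zero => simp
  | succ n ih =>
    calc f (m * (n + 1)) ≤ c * f (m * n) := h n
      _ ≤ c * (c ^ n * f 0) := mul_le_mul_of_nonneg_left ih hc
      _ = c ^ (n + 1) * f 0 := by ring

section

variable {α : Type*} [PseudoMetricSpace α] {z : ℕ → α}

lemma dist_mul_succ_le_of_antitone (hz : Antitone fun k => dist (z (k + 1)) (z k)) (m k : ℕ) :
    dist (z (m * k)) (z (m * (k + 1))) ≤ m * dist (z (m * k + 1)) (z (m * k)) := by
  calc dist (z (m * k)) (z (m * (k + 1)))
      ≤ ∑ j ∈ Finset.range m, dist (z (m * k + j)) (z (m * k + j + 1)) := by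
        simpa only [Nat.mul_succ, add_zero, add_assoc] using dist_le_range_sum_dist (fun j => z (m * k + j)) m
    _ ≤ ∑ _j ∈ Finset.range m, dist (z (m * k + 1)) (z (m * k)) :=
        Finset.sum_le_sum fun j _ => by
          rw [dist_comm]
          exact hz (Nat.le_add_right _ j)
    _ = m * dist (z (m * k + 1)) (z (m * k)) := by simp

lemma dist_mul_succ_le_geometric {m : ℕ} {c : ℝ} (hc : 0 ≤ c)
    (hz : Antitone fun k => dist (z (k + 1)) (z k))
    (hrate : ∀ k, dist (z (m * (k + 1) + 1)) (z (m * (k + 1))) ≤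
      c * dist (z (m * k + 1)) (z (m * k))) (k : ℕ) :
    dist (z (m * k)) (z (m * (k + 1))) ≤ m * dist (z 1) (z 0) * c ^ k := by
  have hgeo := le_pow_mul_of_mul_succ_le (f := fun n => dist (z (n + 1)) (z n)) hc hrate k
  simp only [zero_add] at hgeo
  calc dist (z (m * k)) (z (m * (k + 1))) ≤ m * dist (z (m * k + 1)) (z (m * k)) :=
        dist_mul_succ_le_of_antitone hz m k
    _ ≤ m * (c ^ k * dist (z 1) (z 0)) := by gcongr
    _ = m * dist (z 1) (z 0) * c ^ k := by ring

theorem exists_tendsto_mul_of_antitone_of_geometric [CompleteSpace α] {m : ℕ} {c : ℝ}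
    (hc0 : 0 ≤ c) (hc1 : c < 1) (hz : Antitone fun k => dist (z (k + 1)) (z k))
    (hrate : ∀ k, dist (z (m * (k + 1) + 1)) (z (m * (k + 1))) ≤
      c * dist (z (m * k + 1)) (z (m * k))) :
    ∃ a, Tendsto (fun k => z (m * k)) atTop (𝓝 a) ∧
      ∀ k, dist (z (m * k)) a ≤ m * dist (z 1) (z 0) / (1 - c) * c ^ k := by
  have hstep := dist_mul_succ_le_geometric hc0 hz hrate
  obtain ⟨a, ha⟩ := cauchySeq_tendsto_of_complete (cauchySeq_of_le_geometric c _ hc1 hstep)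
  refine ⟨a, ha, fun k => ?_⟩
  calc dist (z (m * k)) a ≤ m * dist (z 1) (z 0) * c ^ k / (1 - c) :=
        dist_le_of_le_geometric_of_tendsto c _ hc1 hstep ha k
    _ = m * dist (z 1) (z 0) / (1 - c) * c ^ k := by ring

end

theorem linear_extendibility_implies_Rlinear_convergence_general
    {E : Type*} [NormedAddCommGroup E] [InnerProductSpace ℝ E] [FiniteDimensional ℝ E]
    (Λ : Set E) (hΛclosed : IsClosed Λ)
    (m : ℕ) (c : ℝ) (hc0 : 0 ≤ c) (hc1 : c < 1)
    (x z : ℕ → E)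
    (hzΛ : ∀ k, z k ∈ Λ)
    (hzx : ∀ k, z (m * k) = x k)
    (hdec : ∀ k, ‖z (k + 2) - z (k + 1)‖ ≤ ‖z (k + 1) - z k‖)
    (hrate : ∀ k, ‖z (m * (k + 1) + 1) - z (m * (k + 1))‖ ≤ c * ‖z (m * k + 1) - z (m * k)‖) :
    ∃ xlim ∈ Λ, ∀ k, ‖x k - xlim‖ ≤ (m * ‖z 1 - z 0‖ / (1 - c)) * c ^ k := by
  simp only [← dist_eq_norm] at hdec hrate ⊢
  obtain ⟨xlim, hlim, hbound⟩ := exists_tendsto_mul_of_antitone_of_geometric hc0 hc1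
    (antitone_nat_of_succ_le hdec) hrate
  simp only [hzx] at hlim hbound
  exact ⟨xlim, hΛclosed.mem_of_tendsto hlim (.of_forall fun k => hzx k ▸ hzΛ (m * k)), hbound⟩

/-- If `(x k)` is linearly extendible on the closed nonempty set `Λ`
with frequency `m ≥ 1` and rate `c ∈ [0,1)`, witnessed by the extension sequence `(z k)`,
then there is `xlim ∈ Λ` with `‖x k − xlim‖ ≤ γ c^k` for all `k`, where
`γ = m‖z 1 − z 0‖/(1 − c)`; in particular `(x k)` converges R-linearly to `xlim` with rate `c`. -/
theorem linear_extendibility_implies_Rlinear_convergence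
    {E : Type*} [NormedAddCommGroup E] [InnerProductSpace ℝ E] [FiniteDimensional ℝ E]
    (Λ : Set E) (hΛclosed : IsClosed Λ) (hΛne : Λ.Nonempty)
    (m : ℕ) (hm : 1 ≤ m) (c : ℝ) (hc0 : 0 ≤ c) (hc1 : c < 1)
    (x z : ℕ → E)
    (hzΛ : ∀ k, z k ∈ Λ)
    (hzx : ∀ k, z (m * k) = x k)
    (hdec : ∀ k, ‖z (k + 2) - z (k + 1)‖ ≤ ‖z (k + 1) - z k‖)
    (hrate : ∀ k, ‖z (m * (k + 1) + 1) - z (m * (k + 1))‖ ≤ c * ‖z (m * k + 1) - z (m * k)‖) :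
    ∃ xlim ∈ Λ, ∀ k, ‖x k - xlim‖ ≤ (m * ‖z 1 - z 0‖ / (1 - c)) * c ^ k :=
  linear_extendibility_implies_Rlinear_convergence_general Λ hΛclosed m c hc0 hc1 x z hzΛ hzx hdec
    hrate
end

section
/- Let Λ ⊆ E, let T : E ⇉ E, and let x̃ be an isolated point of Fix T ∩ Λ, i.e. there is δ₀ > 0 with Fix T ∩ Λ ∩ B_{δ₀}(x̃) = {x̃}. Suppose T is almost nonexpansive on B_δ(x̃) ∩ Λ with some violation ε ≥ 0 for some δ > 0. Then there exists ρ > 0 such that for every c ∈ [0,1) and every sequence (x_k)_{k∈ℕ} with x₀ ∈ B_ρ(x̃) ∩ Λ and x_{k+1} ∈ T x_k ⊆ Λ for all k, the sequence (x_k) is linearly monotone with respect to Fix T ∩ Λ with constant c if and only if (x_k) converges Q-linearly to x̃ with rate c. -/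
/-!
Within `δ₀ / 2` of an isolated point `x̃` of `Fix T ∩ Λ`, the distance to `Fix T ∩ Λ` is the
distance to `x̃`, so the two contraction conditions coincide as long as the iterates stay there.
Either condition with `c ≤ 1` keeps `‖x_k - x̃‖` below its initial value `ρ`; and with
`ρ = min δ (δ₀ / 2) / max 1 √(1 + ε)`, almost nonexpansiveness against the fixed point `x̃` shows
that one step from `B_ρ(x̃)` cannot leave `B_{δ₀/2}(x̃)` before the condition is applied.
-/

open Metric

theorem Metric.infDist_eq_dist_of_inter_ball_eq_singleton {α : Type*} [PseudoMetricSpace α]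
    {S : Set α} {a y : α} {r : ℝ} (ha : a ∈ S) (hS : S ∩ ball a r = {a})
    (hy : dist y a ≤ r / 2) : infDist y S = dist y a := by
  refine le_antisymm (infDist_le_dist_of_mem ha) ((le_infDist ⟨a, ha⟩).2 fun w hw => ?_)
  by_cases hwa : w ∈ ball a r
  · rw [show w = a from (hS ▸ ⟨hw, hwa⟩ : w ∈ ({a} : Set α))]
  · have : r ≤ dist w a := not_lt.1 hwa
    linarith [dist_triangle_left w a y]

theorem forall_succ_le_mul_iff_of_eq_of_le {D d : ℕ → ℝ} {c ρ R : ℝ} (hc : c ≤ 1)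
    (hρR : ρ ≤ R) (hd : ∀ k, 0 ≤ d k) (hD : ∀ k, d k ≤ R → D k = d k)
    (hstep : ∀ k, d k < ρ → d (k + 1) ≤ R) (h0 : d 0 < ρ) :
    (∀ k, D (k + 1) ≤ c * D k) ↔ ∀ k, d (k + 1) ≤ c * d k := by
  have hle_of_contract : ∀ k, d (k + 1) ≤ c * d k → d (k + 1) ≤ d k := fun k h =>
    h.trans (mul_le_of_le_one_left (hd k) hc)
  have hiff_of_lt : (∀ k, d k < ρ) → ∀ k, (D (k + 1) ≤ c * D k ↔ d (k + 1) ≤ c * d k) :=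
    fun hlt k => by
      rw [hD k ((hlt k).le.trans hρR), hD (k + 1) ((hlt (k + 1)).le.trans hρR)]
  constructor
  · intro hmono
    have hlt : ∀ k, d k < ρ := by
      intro k
      induction k with
      | zero => exact h0
      | succ k ih =>
        have hcontract := hmono k
        rw [hD k (ih.le.trans hρR), hD (k + 1) (hstep k ih)] at hcontract
        exact (hle_of_contract k hcontract).trans_lt ih
    exact fun k => (hiff_of_lt hlt k).1 (hmono k)
  · intro hq
    have hlt : ∀ k, d k < ρ := by
      intro k
      induction k with
      | zero => exact h0
      | succ k ih => exact (hle_of_contract k (hq k)).trans_lt ih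
    exact fun k => (hiff_of_lt hlt k).2 (hq k)

theorem isolated_fixed_point_linear_monotone_iff_Qlinear_general
    {E : Type*} [NormedAddCommGroup E]
    (T : E → Set E) (Λ : Set E)
    (Fix : Set E) (hFixdef : Fix = {y : E | y ∈ T y})
    (xlim : E) (hxlim : xlim ∈ Fix ∩ Λ)
    (δ₀ : ℝ) (hδ₀ : 0 < δ₀)
    (hisolated : Fix ∩ Λ ∩ Metric.ball xlim δ₀ = {xlim})
    (δ ε : ℝ) (hδ : 0 < δ)
    (hane : ∀ u ∈ Metric.ball xlim δ ∩ Λ, ∀ v ∈ Metric.ball xlim δ ∩ Λ,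
      ∀ up ∈ T u, ∀ vp ∈ T v, ‖up - vp‖ ≤ Real.sqrt (1 + ε) * ‖u - v‖) :
    ∃ ρ > 0, ∀ c : ℝ, 0 ≤ c → c < 1 → ∀ x : ℕ → E,
      x 0 ∈ Metric.ball xlim ρ ∩ Λ →
      (∀ k, x (k + 1) ∈ T (x k)) →
      (∀ k, T (x k) ⊆ Λ) →
      ((∀ k, Metric.infDist (x (k + 1)) (Fix ∩ Λ) ≤ c * Metric.infDist (x k) (Fix ∩ Λ)) ↔
        (∀ k, ‖x (k + 1) - xlim‖ ≤ c * ‖x k - xlim‖)) := by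
  set L := Real.sqrt (1 + ε)
  set m := min δ (δ₀ / 2)
  have hL : 0 < max 1 L := lt_max_of_lt_left one_pos
  have hm : 0 < m := lt_min hδ (half_pos hδ₀)
  refine ⟨m / max 1 L, div_pos hm hL, fun c _ hc x hx0 hstep hsub => ?_⟩
  have hρm : m / max 1 L ≤ m := div_le_self hm.le (le_max_left _ _)
  have hΛ : ∀ k, x k ∈ Λ
    | 0 => hx0.2
    | k + 1 => hsub k (hstep k)
  have hfix : xlim ∈ T xlim := (hFixdef ▸ hxlim.1 : xlim ∈ {y | y ∈ T y})
  simp_rw [← dist_eq_norm]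
  refine forall_succ_le_mul_iff_of_eq_of_le hc.le (hρm.trans (min_le_right _ _))
    (fun k => dist_nonneg) (fun k hk => infDist_eq_dist_of_inter_ball_eq_singleton hxlim hisolated hk)
    (fun k hk => ?_) hx0.1
  calc dist (x (k + 1)) xlim ≤ L * dist (x k) xlim := by
        simpa only [dist_eq_norm] using hane (x k) ⟨hk.trans_le (hρm.trans (min_le_left _ _)), hΛ k⟩
          xlim ⟨mem_ball_self hδ, hxlim.2⟩ _ (hstep k) _ hfix
    _ ≤ max 1 L * (m / max 1 L) := by gcongr; exact le_max_right _ _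
    _ = m := mul_div_cancel₀ _ hL.ne'
    _ ≤ δ₀ / 2 := min_le_right _ _

/-- If `xlim` is an isolated point of `Fix T ∩ Λ` and `T` is almost
nonexpansive on `B_δ(xlim) ∩ Λ`, then there is `ρ > 0` such that for every `c ∈ [0,1)` and
every iteration of `T` starting in `B_ρ(xlim) ∩ Λ` and remaining in `Λ`, linear monotonicity
with respect to `Fix T ∩ Λ` with constant `c` is equivalent to Q-linear convergence to
`xlim` with rate `c`. -/
theorem isolated_fixed_point_linear_monotone_iff_Qlinear
    {E : Type*} [NormedAddCommGroup E] [InnerProductSpace ℝ E] [FiniteDimensional ℝ E]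
    (T : E → Set E) (Λ : Set E)
    (Fix : Set E) (hFixdef : Fix = {y : E | y ∈ T y})
    (xlim : E) (hxlim : xlim ∈ Fix ∩ Λ)
    (δ₀ : ℝ) (hδ₀ : 0 < δ₀)
    (hisolated : Fix ∩ Λ ∩ Metric.ball xlim δ₀ = {xlim})
    (δ ε : ℝ) (hδ : 0 < δ) (hε : 0 ≤ ε)
    (hane : ∀ u ∈ Metric.ball xlim δ ∩ Λ, ∀ v ∈ Metric.ball xlim δ ∩ Λ,
      ∀ up ∈ T u, ∀ vp ∈ T v, ‖up - vp‖ ≤ Real.sqrt (1 + ε) * ‖u - v‖) :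
    ∃ ρ > 0, ∀ c : ℝ, 0 ≤ c → c < 1 → ∀ x : ℕ → E,
      x 0 ∈ Metric.ball xlim ρ ∩ Λ →
      (∀ k, x (k + 1) ∈ T (x k)) →
      (∀ k, T (x k) ⊆ Λ) →
      ((∀ k, Metric.infDist (x (k + 1)) (Fix ∩ Λ) ≤ c * Metric.infDist (x k) (Fix ∩ Λ)) ↔
        (∀ k, ‖x (k + 1) - xlim‖ ≤ c * ‖x k - xlim‖)) :=
  isolated_fixed_point_linear_monotone_iff_Qlinear_general T Λ Fix hFixdef xlim hxlim δ₀ hδ₀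
    hisolated δ ε hδ hane
end

section
/- Let T : E ⇉ E and Λ ⊆ E be such that T x is nonempty and T x ⊆ Λ for every x ∈ Λ, let Fix T ∩ Λ be closed and nonempty, let Ω ⊆ Λ, and let c ∈ [0,1). Suppose that for every x₀ ∈ Ω, every sequence (x_k)_{k∈ℕ} with x_{k+1} ∈ T x_k for all k is linearly monotone with respect to Fix T ∩ Λ with constant c. Then for every x ∈ Ω, dist(x, Fix T ∩ Λ) ≤ (1/(1−c))·inf{‖x⁺ − x‖ : x⁺ ∈ T x}; that is, the mapping Φ = T − Id is metrically subregular on Ω for 0 relative to Λ with constant 1/(1−c). -/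
/-!
Given `x ∈ Ω` and `x⁺ ∈ T x`, the pair `x, x⁺` extends to a full iteration of `T`, because `T`
has nonempty values on the invariant set `Λ`. Monotonicity at the first step and the triangle
inequality give `d(x) ≤ d(x⁺) + ‖x - x⁺‖ ≤ c d(x) + ‖x - x⁺‖`, where `d = dist(·, Fix T ∩ Λ)`;
taking the infimum over `x⁺ ∈ T x` yields `(1 - c) d(x) ≤ dist(x, T x)`.
-/

open Metric

section Orbit

variable {α : Type*} {T : α → Set α} {Λ : Set α}

lemma exists_orbit_of_mem (hT : ∀ x ∈ Λ, (T x).Nonempty ∧ T x ⊆ Λ) {x : α} (hx : x ∈ Λ) :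
    ∃ s : ℕ → α, s 0 = x ∧ ∀ k, s (k + 1) ∈ T (s k) := by
  classical
  let g : α → α := fun y => if hy : y ∈ Λ then (hT y hy).1.some else y
  have hg : ∀ y ∈ Λ, g y ∈ T y := fun y hy => by
    simpa only [g, dif_pos hy] using (hT y hy).1.some_mem
  have hΛ : ∀ k, g^[k] x ∈ Λ := by
    intro k
    induction k with
    | zero => exact hx
    | succ k ih =>
      rw [Function.iterate_succ_apply']
      exact (hT _ ih).2 (hg _ ih)
  refine ⟨fun k => g^[k] x, rfl, fun k => ?_⟩
  show g^[k + 1] x ∈ T (g^[k] x)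
  rw [Function.iterate_succ_apply']
  exact hg _ (hΛ k)

lemma exists_orbit_of_mem_of_mem (hT : ∀ x ∈ Λ, (T x).Nonempty ∧ T x ⊆ Λ) {x y : α}
    (hx : x ∈ Λ) (hy : y ∈ T x) :
    ∃ s : ℕ → α, s 0 = x ∧ s 1 = y ∧ ∀ k, s (k + 1) ∈ T (s k) := by
  obtain ⟨s, hs0, hs⟩ := exists_orbit_of_mem hT ((hT x hx).2 hy)
  refine ⟨fun k => Nat.casesOn k x s, rfl, hs0, fun k => ?_⟩
  cases k with
  | zero => show s 0 ∈ T x; rwa [hs0]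
  | succ k => exact hs k

end Orbit

lemma one_sub_mul_infDist_le_dist {X : Type*} [PseudoMetricSpace X] {S : Set X} {x y : X} {c : ℝ}
    (h : infDist y S ≤ c * infDist x S) : (1 - c) * infDist x S ≤ dist x y := by
  linarith [infDist_le_infDist_add_dist (x := x) (y := y) (s := S)]

theorem necessity_of_metric_subregularity_general
    {E : Type*} [NormedAddCommGroup E]
    (T : E → Set E) (Λ : Set E)
    (hT : ∀ x ∈ Λ, (T x).Nonempty ∧ T x ⊆ Λ)
    (Fix : Set E)
    (Ω : Set E) (hΩΛ : Ω ⊆ Λ)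
    (c : ℝ) (hc1 : c < 1)
    (hmono : ∀ x : ℕ → E, x 0 ∈ Ω → (∀ k, x (k + 1) ∈ T (x k)) →
      ∀ k, Metric.infDist (x (k + 1)) (Fix ∩ Λ) ≤ c * Metric.infDist (x k) (Fix ∩ Λ)) :
    ∀ x ∈ Ω, Metric.infDist x (Fix ∩ Λ) ≤ (1 / (1 - c)) * Metric.infDist x (T x) := by
  intro x hx
  have hstep : ∀ y ∈ T x, (1 - c) * infDist x (Fix ∩ Λ) ≤ dist x y := by
    intro y hy
    obtain ⟨s, hs0, hs1, hs⟩ := exists_orbit_of_mem_of_mem hT (hΩΛ hx) hy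
    apply one_sub_mul_infDist_le_dist
    simpa only [hs0, hs1] using hmono s (hs0 ▸ hx) hs 0
  have hinf : (1 - c) * infDist x (Fix ∩ Λ) ≤ infDist x (T x) :=
    (le_infDist (hT x (hΩΛ hx)).1).2 hstep
  rw [one_div, inv_mul_eq_div, le_div_iff₀ (sub_pos.2 hc1)]
  linarith

/-- If every iteration of `T` started in `Ω ⊆ Λ` is linearly monotone with
respect to `Fix T ∩ Λ` with constant `c ∈ [0,1)`, then `Φ = T − Id` is metrically subregular
on `Ω` for `0` relative to `Λ` with constant `1/(1−c)`; explicitly,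
`dist(x, Fix T ∩ Λ) ≤ (1/(1−c))·inf{‖x⁺ − x‖ : x⁺ ∈ T x}` for every `x ∈ Ω`. -/
theorem necessity_of_metric_subregularity
    {E : Type*} [NormedAddCommGroup E] [InnerProductSpace ℝ E] [FiniteDimensional ℝ E]
    (T : E → Set E) (Λ : Set E)
    (hT : ∀ x ∈ Λ, (T x).Nonempty ∧ T x ⊆ Λ)
    (Fix : Set E) (hFixdef : Fix = {y : E | y ∈ T y})
    (hclosed : IsClosed (Fix ∩ Λ)) (hne : (Fix ∩ Λ).Nonempty)
    (Ω : Set E) (hΩΛ : Ω ⊆ Λ)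
    (c : ℝ) (hc0 : 0 ≤ c) (hc1 : c < 1)
    (hmono : ∀ x : ℕ → E, x 0 ∈ Ω → (∀ k, x (k + 1) ∈ T (x k)) →
      ∀ k, Metric.infDist (x (k + 1)) (Fix ∩ Λ) ≤ c * Metric.infDist (x k) (Fix ∩ Λ)) :
    ∀ x ∈ Ω, Metric.infDist x (Fix ∩ Λ) ≤ (1 / (1 - c)) * Metric.infDist x (T x) :=
  necessity_of_metric_subregularity_general T Λ hT Fix Ω hΩΛ c hc1 hmono
end

section
/- Let A, B be closed subsets of E, let (x_k),(b_k) be an alternating projections sequence for (A,B), and suppose (x_k) converges R-linearly to x̄ ∈ A ∩ B with rate c ∈ [0,1), i.e. there is γ > 0 with ‖x_k − x̄‖ ≤ γ·c^k for all k ∈ ℕ. Let S be any set with x̄ ∈ S ⊆ A ∩ B and assume dist(x_k, S) > 0 for every k ∈ ℕ. Then there exists a strictly increasing sequence of indices (k_n)_{n∈ℕ} with k₀ = 0 such that dist(x_{k_{n+1}}, S) ≤ c·dist(x_{k_n}, S) for all n ∈ ℕ; that is, the subsequence (x_{k_n}) is linearly monotone with respect to S with constant c. -/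
/-!
Since `xbar ∈ S`, the distances `d k = dist(x_k, S)` satisfy `0 < d k ≤ γ c^k`, so they are
positive and tend to `0`. Hence (as `c > 0`, forced by `0 < d 1 ≤ γ c`) from any index `k`
some later index `m` has `d m ≤ c · d k`, and iterating this choice starting at `0` gives the
subsequence.
-/

/-- The (set-valued) projector onto a set `A`. -/
def projSet {E : Type*} [NormedAddCommGroup E] (A : Set E) (x : E) : Set E :=
  {a | a ∈ A ∧ ‖x - a‖ = Metric.infDist x A}

open Filter Topology

theorem exists_strictMono_chain_of_forall_exists_gt {P : ℕ → ℕ → Prop}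
    (h : ∀ k, ∃ m, k < m ∧ P k m) :
    ∃ ks : ℕ → ℕ, StrictMono ks ∧ ks 0 = 0 ∧ ∀ n, P (ks n) (ks (n + 1)) := by
  choose next hlt hP using h
  exact ⟨fun n => next^[n] 0, strictMono_nat_of_lt_succ fun n => by
    simpa only [Function.iterate_succ_apply'] using hlt _, rfl, fun n => by
    simpa only [Function.iterate_succ_apply'] using hP _⟩

theorem exists_gt_le_mul_of_tendsto_zero {d : ℕ → ℝ} (hd : Tendsto d atTop (𝓝 0))
    (hpos : ∀ k, 0 < d k) {c : ℝ} (hc : 0 < c) (k : ℕ) :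
    ∃ m, k < m ∧ d m ≤ c * d k := by
  obtain ⟨m, hmk, hm⟩ :=
    ((eventually_gt_atTop k).and (hd.eventually (gt_mem_nhds (mul_pos hc (hpos k))))).exists
  exact ⟨m, hmk, hm.le⟩

theorem Rlinear_convergence_yields_linearly_monotone_subsequence_general
    {E : Type*} [NormedAddCommGroup E]
    (S : Set E)
    (x : ℕ → E)
    (xbar : E)
    (γ c : ℝ) (hc0 : 0 ≤ c) (hc1 : c < 1)
    (hR : ∀ k, ‖x k - xbar‖ ≤ γ * c ^ k)
    (hxbarS : xbar ∈ S)
    (hpos : ∀ k, 0 < Metric.infDist (x k) S) :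
    ∃ ks : ℕ → ℕ, StrictMono ks ∧ ks 0 = 0 ∧
      ∀ n, Metric.infDist (x (ks (n + 1))) S ≤ c * Metric.infDist (x (ks n)) S := by
  have hdist_le (k : ℕ) : Metric.infDist (x k) S ≤ γ * c ^ k :=
    (Metric.infDist_le_dist_of_mem hxbarS).trans ((dist_eq_norm _ _).trans_le (hR k))
  have hc : 0 < c := by
    refine hc0.lt_of_ne fun hc => ?_
    have := hdist_le 1
    rw [← hc, pow_one, mul_zero] at this
    exact (hpos 1).not_ge this
  have hdist_tendsto : Tendsto (fun k => Metric.infDist (x k) S) atTop (𝓝 0) := by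
    refine squeeze_zero (fun k => (hpos k).le) hdist_le ?_
    simpa using (tendsto_pow_atTop_nhds_zero_of_lt_one hc0 hc1).const_mul γ
  exact exists_strictMono_chain_of_forall_exists_gt
    (exists_gt_le_mul_of_tendsto_zero hdist_tendsto hpos hc)

/-- If an alternating projections sequence `(x_k)` converges R-linearly to
`xbar ∈ A ∩ B` with rate `c` and `dist(x_k, S) > 0` for all `k` (where `xbar ∈ S ⊆ A ∩ B`),
then some subsequence `(x_{k_n})` with `k₀ = 0` is linearly monotone with respect to `S`
with constant `c`. -/
theorem Rlinear_convergence_yields_linearly_monotone_subsequence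
    {E : Type*} [NormedAddCommGroup E] [InnerProductSpace ℝ E] [FiniteDimensional ℝ E]
    (A B S : Set E) (hA : IsClosed A) (hB : IsClosed B)
    (x b : ℕ → E)
    (hb : ∀ k, b k ∈ projSet B (x k)) (hx : ∀ k, x (k + 1) ∈ projSet A (b k))
    (xbar : E) (hxbarAB : xbar ∈ A ∩ B)
    (γ c : ℝ) (hγ : 0 < γ) (hc0 : 0 ≤ c) (hc1 : c < 1)
    (hR : ∀ k, ‖x k - xbar‖ ≤ γ * c ^ k)
    (hxbarS : xbar ∈ S) (hS : S ⊆ A ∩ B)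
    (hpos : ∀ k, 0 < Metric.infDist (x k) S) :
    ∃ ks : ℕ → ℕ, StrictMono ks ∧ ks 0 = 0 ∧
      ∀ n, Metric.infDist (x (ks (n + 1))) S ≤ c * Metric.infDist (x (ks n)) S :=
  Rlinear_convergence_yields_linearly_monotone_subsequence_general S x xbar γ c hc0 hc1 hR hxbarS
    hpos
end

section
/- Let Λ, A, B be closed subsets of E, let x̄ ∈ S ⊆ A ∩ B ∩ Λ, let m ≥ 1 be an integer, c ∈ [0,1), and ρ > 0. Suppose that every alternating projections sequence (x_k),(b_k) for (A,B) with x₀ ∈ A ∩ B_ρ(x̄) ∩ Λ lies in Λ, converges R-linearly with rate c to a point of S, and admits an index k₁ with 1 ≤ k₁ ≤ m and dist(x_{k₁}, S) ≤ c·dist(x₀, S). Then dist(x, A ∩ B ∩ Λ) ≤ (2m/(1−c))·dist(x, B) for all x ∈ A ∩ B_ρ(x̄) ∩ Λ; in particular the collection {A,B} is subtransversal at x̄ relative to Λ with constant at most 2m/(1−c). -/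
open Metric Finset

section Projection

variable {E : Type*} [NormedAddCommGroup E] {A B : Set E} {x a b x' : E}

theorem dist_eq_infDist_of_mem_projSet (h : a ∈ projSet A x) : dist x a = infDist x A := by
  rw [dist_eq_norm]
  exact h.2

theorem projSet_nonempty [ProperSpace E] (hA : IsClosed A) (hne : A.Nonempty) (x : E) :
    (projSet A x).Nonempty := by
  obtain ⟨a, ha, hdist⟩ := hA.exists_infDist_eq_dist hne x
  exact ⟨a, ha, by rw [← dist_eq_norm, hdist]⟩

theorem dist_le_infDist_of_mem_projSet_of_mem_projSet (hx : x ∈ A) (hb : b ∈ projSet B x)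
    (hx' : x' ∈ projSet A b) : dist b x' ≤ infDist x B :=
  calc dist b x' = infDist b A := dist_eq_infDist_of_mem_projSet hx'
    _ ≤ dist b x := infDist_le_dist_of_mem hx
    _ = infDist x B := by rw [dist_comm, dist_eq_infDist_of_mem_projSet hb]

end Projection

structure IsAltProjSeq {E : Type*} [NormedAddCommGroup E] (A B : Set E) (x b : ℕ → E) :
    Prop where
  mem_projSet_right : ∀ k, b k ∈ projSet B (x k)
  mem_projSet_left : ∀ k, x (k + 1) ∈ projSet A (b k)

namespace IsAltProjSeq

variable {E : Type*} [NormedAddCommGroup E] {A B : Set E} {x b : ℕ → E}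

theorem exists_of_proper [ProperSpace E] (hA : IsClosed A) (hB : IsClosed B)
    (hAne : A.Nonempty) (hBne : B.Nonempty) (x₀ : E) :
    ∃ x b : ℕ → E, IsAltProjSeq A B x b ∧ x 0 = x₀ := by
  choose pA hpA using projSet_nonempty hA hAne
  choose pB hpB using projSet_nonempty hB hBne
  refine ⟨fun k => (pA ∘ pB)^[k] x₀, fun k => pB ((pA ∘ pB)^[k] x₀), ⟨fun k => hpB _, ?_⟩, rfl⟩
  intro k
  simp only [Function.iterate_succ_apply', Function.comp_apply]
  exact hpA _

variable (h : IsAltProjSeq A B x b) (h₀ : x 0 ∈ A)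
include h h₀

theorem mem_left : ∀ k, x k ∈ A
  | 0 => h₀
  | k + 1 => (h.mem_projSet_left k).1

theorem antitone_infDist : Antitone fun k => infDist (x k) B :=
  antitone_nat_of_succ_le fun k =>
    (infDist_le_dist_of_mem (h.mem_projSet_right k).1).trans <| by
      rw [dist_comm]
      exact dist_le_infDist_of_mem_projSet_of_mem_projSet (h.mem_left h₀ k)
        (h.mem_projSet_right k) (h.mem_projSet_left k)

theorem dist_succ_le (k : ℕ) : dist (x k) (x (k + 1)) ≤ 2 * infDist (x 0) B :=
  calc dist (x k) (x (k + 1)) ≤ dist (x k) (b k) + dist (b k) (x (k + 1)) := dist_triangle _ _ _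
    _ ≤ infDist (x k) B + infDist (x k) B := by
        gcongr
        · exact (dist_eq_infDist_of_mem_projSet (h.mem_projSet_right k)).le
        · exact dist_le_infDist_of_mem_projSet_of_mem_projSet (h.mem_left h₀ k)
            (h.mem_projSet_right k) (h.mem_projSet_left k)
    _ ≤ 2 * infDist (x 0) B := by
        linarith [h.antitone_infDist h₀ (Nat.zero_le k)]

theorem dist_zero_le (k : ℕ) : dist (x 0) (x k) ≤ 2 * k * infDist (x 0) B :=
  calc dist (x 0) (x k) ≤ ∑ i ∈ range k, dist (x i) (x (i + 1)) := dist_le_range_sum_dist x k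
    _ ≤ ∑ _i ∈ range k, 2 * infDist (x 0) B := sum_le_sum fun i _ => h.dist_succ_le h₀ i
    _ = 2 * k * infDist (x 0) B := by rw [sum_const, card_range, nsmul_eq_mul]; ring

end IsAltProjSeq

theorem infDist_le_dist_div_one_sub_of_le_mul {α : Type*} [PseudoMetricSpace α] {S : Set α}
    {x y : α} {c : ℝ} (hc : c < 1) (hy : infDist y S ≤ c * infDist x S) :
    infDist x S ≤ dist x y / (1 - c) := by
  rw [le_div_iff₀ (sub_pos.mpr hc)]
  linarith [infDist_le_infDist_add_dist (x := x) (y := y) (s := S), dist_comm x y]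

theorem subtransversality_necessary_for_linear_convergence_general
    {E : Type*} [NormedAddCommGroup E] [InnerProductSpace ℝ E] [FiniteDimensional ℝ E]
    (Λ A B S : Set E) (hA : IsClosed A) (hB : IsClosed B)
    (xbar : E) (hxbarS : xbar ∈ S) (hS : S ⊆ A ∩ B ∩ Λ)
    (m : ℕ) (c ρ : ℝ) (hc1 : c < 1)
    (hyp : ∀ x b : ℕ → E,
      (∀ k, b k ∈ projSet B (x k)) → (∀ k, x (k + 1) ∈ projSet A (b k)) →
      x 0 ∈ A ∩ Metric.ball xbar ρ ∩ Λ →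
      (∀ k, x k ∈ Λ) ∧
      (∃ xlim ∈ S, ∃ γ > (0 : ℝ), ∀ k, ‖x k - xlim‖ ≤ γ * c ^ k) ∧
      (∃ k₁, 1 ≤ k₁ ∧ k₁ ≤ m ∧
        Metric.infDist (x k₁) S ≤ c * Metric.infDist (x 0) S)) :
    ∀ x ∈ A ∩ Metric.ball xbar ρ ∩ Λ,
      Metric.infDist x (A ∩ B ∩ Λ) ≤ (2 * m / (1 - c)) * Metric.infDist x B := by
  intro x₀ hx₀
  obtain ⟨x, b, hseq, rfl⟩ :=
    IsAltProjSeq.exists_of_proper hA hB ⟨x₀, hx₀.1.1⟩ ⟨xbar, (hS hxbarS).1.2⟩ x₀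
  obtain ⟨-, -, k, -, hkm, hk⟩ := hyp x b hseq.mem_projSet_right hseq.mem_projSet_left hx₀
  have hkm' : (k : ℝ) ≤ m := by exact_mod_cast hkm
  calc infDist (x 0) (A ∩ B ∩ Λ) ≤ infDist (x 0) S :=
        infDist_le_infDist_of_subset hS ⟨xbar, hxbarS⟩
    _ ≤ dist (x 0) (x k) / (1 - c) := infDist_le_dist_div_one_sub_of_le_mul hc1 hk
    _ ≤ 2 * k * infDist (x 0) B / (1 - c) := by
        gcongr
        exact hseq.dist_zero_le hx₀.1.1 k
    _ ≤ 2 * m / (1 - c) * infDist (x 0) B := by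
        rw [div_mul_eq_mul_div]
        gcongr
        exact infDist_nonneg

/-- If every alternating projections sequence for `(A,B)` starting in
`A ∩ B_ρ(xbar) ∩ Λ` lies in `Λ`, converges R-linearly with rate `c` to a point of `S`, and
admits an index `k₁` with `1 ≤ k₁ ≤ m` and `dist(x_{k₁}, S) ≤ c·dist(x₀, S)`, then
`dist(x, A ∩ B ∩ Λ) ≤ (2m/(1−c))·dist(x, B)` on `A ∩ B_ρ(xbar) ∩ Λ`; in particular `{A,B}`
is subtransversal at `xbar` relative to `Λ` with constant at most `2m/(1−c)`. -/
theorem subtransversality_necessary_for_linear_convergence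
    {E : Type*} [NormedAddCommGroup E] [InnerProductSpace ℝ E] [FiniteDimensional ℝ E]
    (Λ A B S : Set E) (hΛ : IsClosed Λ) (hA : IsClosed A) (hB : IsClosed B)
    (xbar : E) (hxbarS : xbar ∈ S) (hS : S ⊆ A ∩ B ∩ Λ)
    (m : ℕ) (hm : 1 ≤ m) (c ρ : ℝ) (hc0 : 0 ≤ c) (hc1 : c < 1) (hρ : 0 < ρ)
    (hyp : ∀ x b : ℕ → E,
      (∀ k, b k ∈ projSet B (x k)) → (∀ k, x (k + 1) ∈ projSet A (b k)) →
      x 0 ∈ A ∩ Metric.ball xbar ρ ∩ Λ →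
      (∀ k, x k ∈ Λ) ∧
      (∃ xlim ∈ S, ∃ γ > (0 : ℝ), ∀ k, ‖x k - xlim‖ ≤ γ * c ^ k) ∧
      (∃ k₁, 1 ≤ k₁ ∧ k₁ ≤ m ∧
        Metric.infDist (x k₁) S ≤ c * Metric.infDist (x 0) S)) :
    ∀ x ∈ A ∩ Metric.ball xbar ρ ∩ Λ,
      Metric.infDist x (A ∩ B ∩ Λ) ≤ (2 * m / (1 - c)) * Metric.infDist x B :=
  subtransversality_necessary_for_linear_convergence_general Λ A B S hA hB xbar hxbarS hS m c ρ hc1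
    hyp
end

section
/- Let A and B be nonempty closed convex subsets of E. Then for every x ∈ A, ‖P_B(P_A(P_B x)) − P_A(P_B x)‖ · ‖P_B x − x‖ ≥ ‖P_A(P_B x) − P_B x‖². -/
/-!
With `y = P_B x`, `a = P_A y`, `b = P_B a`, the variational inequalities of the two projections
give `‖a - y‖² ≤ ⟪a - y, x - y⟫` (projecting `y` onto `A`, tested at `x ∈ A`) and
`0 ≤ ⟪y - b, x - y⟫` (projecting `x` onto `B`, tested at `b ∈ B`). Adding them,
`‖a - y‖² ≤ ⟪a - b, x - y⟫`, and Cauchy–Schwarz finishes.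
-/

open RealInnerProductSpace

section

variable {E : Type*} [NormedAddCommGroup E] [InnerProductSpace ℝ E]

theorem inner_sub_le_zero_of_norm_sub_eq_infDist {K : Set E} (hK : Convex ℝ K) {u v : E}
    (hv : v ∈ K) (h : ‖u - v‖ = Metric.infDist u K) {w : E} (hw : w ∈ K) :
    ⟪u - v, w - v⟫ ≤ 0 := by
  rw [Metric.infDist_eq_iInf] at h
  simp_rw [dist_eq_norm] at h
  exact (norm_eq_iInf_iff_real_inner_le_zero hK hv).mp h w hw

theorem norm_sub_sq_le_mul_of_inner_nonpos {x y a b : E}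
    (hy : ⟪x - y, b - y⟫ ≤ 0) (ha : ⟪y - a, x - a⟫ ≤ 0) :
    ‖a - y‖ ^ 2 ≤ ‖b - a‖ * ‖y - x‖ := by
  have hay : ⟪a - y, x - y⟫ = ‖a - y‖ ^ 2 - ⟪y - a, x - a⟫ := by
    rw [← real_inner_self_eq_norm_sq]
    simp only [inner_sub_left, inner_sub_right]
    ring
  have hby : ⟪y - b, x - y⟫ = -⟪x - y, b - y⟫ := by
    simp only [inner_sub_left, inner_sub_right, real_inner_comm]
    ring
  have hsplit : ⟪a - b, x - y⟫ = ⟪a - y, x - y⟫ + ⟪y - b, x - y⟫ := by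
    simp only [inner_sub_left, inner_sub_right]
    ring
  calc ‖a - y‖ ^ 2 ≤ ⟪a - b, x - y⟫ := by linarith
    _ ≤ ‖a - b‖ * ‖x - y‖ := real_inner_le_norm _ _
    _ = ‖b - a‖ * ‖y - x‖ := by rw [norm_sub_rev a, norm_sub_rev x]

end

theorem alternating_projections_nondecreasing_rate_general
    {E : Type*} [NormedAddCommGroup E] [InnerProductSpace ℝ E]
    (A B : Set E) (hAconv : Convex ℝ A)
    (hBconv : Convex ℝ B)
    (PA PB : E → E)
    (hPA : ∀ y, PA y ∈ A ∧ ‖y - PA y‖ = Metric.infDist y A)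
    (hPB : ∀ y, PB y ∈ B ∧ ‖y - PB y‖ = Metric.infDist y B) :
    ∀ x ∈ A,
      ‖PB (PA (PB x)) - PA (PB x)‖ * ‖PB x - x‖ ≥ ‖PA (PB x) - PB x‖ ^ 2 := by
  intro x hx
  have hy := inner_sub_le_zero_of_norm_sub_eq_infDist hBconv (hPB x).1 (hPB x).2
    (hPB (PA (PB x))).1
  have ha := inner_sub_le_zero_of_norm_sub_eq_infDist hAconv (hPA (PB x)).1 (hPA (PB x)).2 hx
  exact norm_sub_sq_le_mul_of_inner_nonpos hy ha

/-- **non-decreasing rate lemma.** For the metric projections `PA`, `PB`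
onto nonempty closed convex sets `A`, `B` and any `x ∈ A`,
`‖PB(PA(PB x)) − PA(PB x)‖·‖PB x − x‖ ≥ ‖PA(PB x) − PB x‖²`. -/
theorem alternating_projections_nondecreasing_rate
    {E : Type*} [NormedAddCommGroup E] [InnerProductSpace ℝ E] [FiniteDimensional ℝ E]
    (A B : Set E) (hAne : A.Nonempty) (hAc : IsClosed A) (hAconv : Convex ℝ A)
    (hBne : B.Nonempty) (hBc : IsClosed B) (hBconv : Convex ℝ B)
    (PA PB : E → E)
    (hPA : ∀ y, PA y ∈ A ∧ ‖y - PA y‖ = Metric.infDist y A)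
    (hPB : ∀ y, PB y ∈ B ∧ ‖y - PB y‖ = Metric.infDist y B) :
    ∀ x ∈ A,
      ‖PB (PA (PB x)) - PA (PB x)‖ * ‖PB x - x‖ ≥ ‖PA (PB x) - PB x‖ ^ 2 :=
  alternating_projections_nondecreasing_rate_general A B hAconv hBconv PA PB hPA hPB
end

section
/- Let A and B be nonempty closed convex subsets of E with A ∩ B ≠ ∅, and let (x_k)_{k∈ℕ} be the alternating projections sequence x_{k+1} = P_A(P_B x_k) with x₀ ∈ A. If x₁ ∉ A ∩ B, then x₀ ∉ B, 0 < ‖x₁ − P_B x₀‖ < ‖P_B x₀ − x₀‖, and, setting c := (‖x₁ − P_B x₀‖ / ‖P_B x₀ − x₀‖)² ∈ (0,1), one has dist(x_k, B) ≥ c^k · dist(x₀, B) > 0 for all k ∈ ℕ; in particular x_k ∉ A ∩ B for every k ∈ ℕ. Thus either the alternating projections method finds a point of A ∩ B after one iteration, or it never reaches A ∩ B after any finite number of iterations. -/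
/-!
Write `dₖ = ‖P_B xₖ - xₖ‖ = dist(xₖ, B)` and `eₖ = ‖xₖ₊₁ - P_B xₖ‖ = dist(P_B xₖ, A)`. The
obtuse-angle inequalities characterising the two projections give `eₖ² ≤ dₖ dₖ₊₁` and
`dₖ₊₁² ≤ eₖ eₖ₊₁`: the step lengths `d₀, e₀, d₁, e₁, …` form a log-convex sequence, so the ratio of
consecutive steps never drops below `e₀ / d₀`, whence `dₖ ≥ (e₀ / d₀)^(2k) d₀`. The first ratio is
`< 1`: if `e₀ = d₀`, then `x₀` and `P_B x₀` are mutual nearest points of `A` and `B`, and for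
intersecting convex sets this forces `x₀ = P_B x₀ ∈ B`.
-/

open Metric RealInnerProductSpace

section LogConvex

variable {K : Type*} [Field K] [LinearOrder K] [IsStrictOrderedRing K]

theorem pow_mul_le_of_sq_le_mul {s : ℕ → K} (h0 : 0 < s 0) (h1 : 0 < s 1)
    (hs : ∀ n, s (n + 1) ^ 2 ≤ s n * s (n + 2)) (n : ℕ) : (s 1 / s 0) ^ n * s 0 ≤ s n := by
  set r := s 1 / s 0
  have hr : 0 < r := div_pos h1 h0
  have ratio : ∀ n, 0 < s n ∧ r * s n ≤ s (n + 1) := by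
    intro n
    induction n with
    | zero => exact ⟨h0, (div_mul_cancel₀ _ h0.ne').le⟩
    | succ n ih =>
      obtain ⟨hpos, hle⟩ := ih
      have hpos' : 0 < s (n + 1) := (mul_pos hr hpos).trans_le hle
      refine ⟨hpos', le_of_mul_le_mul_left ?_ hpos⟩
      calc s n * (r * s (n + 1)) = r * s n * s (n + 1) := by ring
        _ ≤ s (n + 1) ^ 2 := by rw [sq]; gcongr
        _ ≤ s n * s (n + 2) := hs n
  induction n with
  | zero => simp
  | succ n ih =>
    calc r ^ (n + 1) * s 0 = r * (r ^ n * s 0) := by ring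
      _ ≤ r * s n := by gcongr
      _ ≤ s (n + 1) := (ratio n).2

theorem pow_mul_le_of_sq_le_mul_of_sq_le_mul {d e : ℕ → K} (hd : 0 < d 0) (he : 0 < e 0)
    (hde : ∀ k, e k ^ 2 ≤ d k * d (k + 1)) (hed : ∀ k, d (k + 1) ^ 2 ≤ e k * e (k + 1))
    (k : ℕ) : ((e 0 / d 0) ^ 2) ^ k * d 0 ≤ d k := by
  -- interleave the two sequences as `d₀, e₀, d₁, e₁, …`
  let s : ℕ → K := fun n => if Even n then d (n / 2) else e (n / 2)
  have hs : ∀ n, s (n + 1) ^ 2 ≤ s n * s (n + 2) := by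
    intro n
    obtain ⟨m, rfl | rfl⟩ := Nat.even_or_odd' n
    · simpa [s, parity_simps, Nat.mul_add_div] using hde m
    · simpa [s, parity_simps, Nat.mul_add_div, show 2 * m + 1 + 1 = 2 * (m + 1) by ring,
        show 2 * m + 1 + 2 = 2 * (m + 1) + 1 by ring] using hed m
  simpa [s, ← pow_mul] using
    pow_mul_le_of_sq_le_mul (s := s) (by simpa [s]) (by simpa [s]) hs (2 * k)

end LogConvex

section Projection

variable {E : Type*} [NormedAddCommGroup E]

theorem eq_of_norm_sub_eq_infDist_of_mem {K : Set E} {u v : E} (h : ‖u - v‖ = infDist u K)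
    (hu : u ∈ K) : v = u :=
  (norm_sub_eq_zero_iff.1 (h.trans (infDist_zero_of_mem hu))).symm

variable [InnerProductSpace ℝ E]

theorem real_inner_sub_le_zero_of_norm_sub_eq_infDist {K : Set E} (hK : Convex ℝ K) {u v : E}
    (hv : v ∈ K) (h : ‖u - v‖ = infDist u K) : ∀ w ∈ K, ⟪u - v, w - v⟫ ≤ 0 := by
  refine (norm_eq_iInf_iff_real_inner_le_zero hK hv).1 ?_
  simp_rw [h, infDist_eq_iInf, dist_eq_norm]

theorem sq_norm_sub_le_mul_norm_sub {u p q w : E} (hw : ⟪u - p, w - p⟫ ≤ 0)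
    (hq : ⟪p - q, u - q⟫ ≤ 0) : ‖q - p‖ ^ 2 ≤ ‖u - p‖ * ‖q - w‖ := by
  have h : ‖q - p‖ ^ 2 ≤ ⟪u - p, q - w⟫ := by
    rw [← real_inner_self_eq_norm_sq]
    simp only [inner_sub_left, inner_sub_right, real_inner_comm] at hw hq ⊢
    linarith
  exact h.trans (real_inner_le_norm _ _)

theorem eq_of_real_inner_sub_le_zero {a b z : E} (ha : ⟪b - a, z - a⟫ ≤ 0)
    (hb : ⟪a - b, z - b⟫ ≤ 0) : a = b := by
  have h : ‖b - a‖ ^ 2 ≤ 0 := by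
    rw [← real_inner_self_eq_norm_sq]
    simp only [inner_sub_left, inner_sub_right, real_inner_comm] at ha hb ⊢
    linarith
  simpa [sub_eq_zero, eq_comm] using h

theorem infDist_lt_norm_sub_of_ne {A B : Set E} (hA : Convex ℝ A) (hAB : (A ∩ B).Nonempty)
    {a b : E} (ha : a ∈ A) (hb : ∀ w ∈ B, ⟪a - b, w - b⟫ ≤ 0) (hab : a ≠ b) :
    infDist b A < ‖b - a‖ := by
  obtain ⟨z, hzA, hzB⟩ := hAB
  refine (infDist_le_dist_of_mem ha).trans_eq (dist_eq_norm _ _) |>.lt_of_ne fun h => hab ?_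
  exact eq_of_real_inner_sub_le_zero
    (real_inner_sub_le_zero_of_norm_sub_eq_infDist hA ha h.symm z hzA) (hb z hzB)

theorem sq_norm_sub_le_of_alternating {C D : Set E} {P Q : E → E}
    (hP : ∀ y, ∀ w ∈ C, ⟪y - P y, w - P y⟫ ≤ 0) (hQD : ∀ y, Q y ∈ D)
    (hQ : ∀ y, ∀ w ∈ D, ⟪y - Q y, w - Q y⟫ ≤ 0) {a : E} (ha : a ∈ C) :
    ‖P (Q a) - Q a‖ ^ 2 ≤ ‖a - Q a‖ * ‖P (Q a) - Q (P (Q a))‖ :=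
  sq_norm_sub_le_mul_norm_sub (hQ a _ (hQD _)) (hP (Q a) a ha)

end Projection

theorem alternating_projections_one_step_or_never_general
    {E : Type*} [NormedAddCommGroup E] [InnerProductSpace ℝ E]
    (A B : Set E) (hAconv : Convex ℝ A)
    (hBconv : Convex ℝ B)
    (hABne : (A ∩ B).Nonempty)
    (PA PB : E → E)
    (hPA : ∀ y, PA y ∈ A ∧ ‖y - PA y‖ = Metric.infDist y A)
    (hPB : ∀ y, PB y ∈ B ∧ ‖y - PB y‖ = Metric.infDist y B)
    (x : ℕ → E) (hx0 : x 0 ∈ A) (hrec : ∀ k, x (k + 1) = PA (PB (x k)))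
    (hx1 : x 1 ∉ A ∩ B) :
    x 0 ∉ B ∧
    0 < ‖x 1 - PB (x 0)‖ ∧
    ‖x 1 - PB (x 0)‖ < ‖PB (x 0) - x 0‖ ∧
    (0 < (‖x 1 - PB (x 0)‖ / ‖PB (x 0) - x 0‖) ^ 2 ∧
      (‖x 1 - PB (x 0)‖ / ‖PB (x 0) - x 0‖) ^ 2 < 1) ∧
    (∀ k, ((‖x 1 - PB (x 0)‖ / ‖PB (x 0) - x 0‖) ^ 2) ^ k * Metric.infDist (x 0) B ≤
        Metric.infDist (x k) B ∧
      0 < Metric.infDist (x k) B ∧ x k ∉ A ∩ B) := by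
  have varA y := real_inner_sub_le_zero_of_norm_sub_eq_infDist hAconv (hPA y).1 (hPA y).2
  have varB y := real_inner_sub_le_zero_of_norm_sub_eq_infDist hBconv (hPB y).1 (hPB y).2
  have hxA : ∀ k, x k ∈ A := by
    rintro (_ | k)
    exacts [hx0, hrec k ▸ (hPA _).1]
  have hdist k : infDist (x k) B = ‖PB (x k) - x k‖ := by rw [norm_sub_rev, (hPB _).2]
  have hx0B : x 0 ∉ B := fun h => hx1 <| by
    rw [hrec, eq_of_norm_sub_eq_infDist_of_mem (hPB _).2 h,
      eq_of_norm_sub_eq_infDist_of_mem (hPA _).2 hx0]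
    exact ⟨hx0, h⟩
  have he0 : 0 < ‖x 1 - PB (x 0)‖ :=
    norm_pos_iff.2 <| sub_ne_zero.2 fun h => hx1 ⟨hxA 1, h ▸ (hPB _).1⟩
  have hd0 : 0 < ‖PB (x 0) - x 0‖ :=
    norm_pos_iff.2 <| sub_ne_zero.2 fun h => hx0B (h ▸ (hPB _).1)
  have hlt : ‖x 1 - PB (x 0)‖ < ‖PB (x 0) - x 0‖ := by
    rw [hrec, norm_sub_rev, (hPA _).2]
    exact infDist_lt_norm_sub_of_ne hAconv hABne hx0 (varB _) fun h => hx0B (h ▸ (hPB _).1)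
  have hgeo := pow_mul_le_of_sq_le_mul_of_sq_le_mul (d := fun k => ‖PB (x k) - x k‖)
    (e := fun k => ‖x (k + 1) - PB (x k)‖) hd0 he0
    (fun k => by
      simpa only [← hrec, norm_sub_rev (x _) (PB (x _))] using
        sq_norm_sub_le_of_alternating varA (fun y => (hPB y).1) varB (hxA k))
    (fun k => by
      simpa only [← hrec, norm_sub_rev (x (k + 1)) (PB (x k)),
        norm_sub_rev (x (k + 1 + 1)) (PB (x (k + 1)))] using
        sq_norm_sub_le_of_alternating varB (fun y => (hPA y).1) varA (hPB (x k)).1)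
  have hc : 0 < (‖x 1 - PB (x 0)‖ / ‖PB (x 0) - x 0‖) ^ 2 := by positivity
  refine ⟨hx0B, he0, hlt, ⟨hc, pow_lt_one₀ (by positivity) ((div_lt_one hd0).2 hlt) two_ne_zero⟩,
    fun k => ?_⟩
  have hpos : 0 < infDist (x k) B :=
    hdist k ▸ (mul_pos (pow_pos hc k) hd0).trans_le (hgeo k)
  exact ⟨by rw [hdist, hdist]; exact hgeo k, hpos, fun h => hpos.ne' (infDist_zero_of_mem h.2)⟩

/-- **lower bound of complexity.** For alternating projections between
nonempty closed convex sets `A`, `B` with `A ∩ B ≠ ∅`, started at `x₀ ∈ A`: if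
`x₁ ∉ A ∩ B` then `x₀ ∉ B`, `0 < ‖x₁ − PB x₀‖ < ‖PB x₀ − x₀‖`, and with
`c = (‖x₁ − PB x₀‖/‖PB x₀ − x₀‖)²` one has `dist(x_k, B) ≥ c^k·dist(x₀, B) > 0` for all
`k`, so `x_k ∉ A ∩ B` for every `k`. Thus the method either finds a point of `A ∩ B` after
one iteration or never reaches `A ∩ B`. -/
theorem alternating_projections_one_step_or_never
    {E : Type*} [NormedAddCommGroup E] [InnerProductSpace ℝ E] [FiniteDimensional ℝ E]
    (A B : Set E) (hAne : A.Nonempty) (hAc : IsClosed A) (hAconv : Convex ℝ A)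
    (hBne : B.Nonempty) (hBc : IsClosed B) (hBconv : Convex ℝ B)
    (hABne : (A ∩ B).Nonempty)
    (PA PB : E → E)
    (hPA : ∀ y, PA y ∈ A ∧ ‖y - PA y‖ = Metric.infDist y A)
    (hPB : ∀ y, PB y ∈ B ∧ ‖y - PB y‖ = Metric.infDist y B)
    (x : ℕ → E) (hx0 : x 0 ∈ A) (hrec : ∀ k, x (k + 1) = PA (PB (x k)))
    (hx1 : x 1 ∉ A ∩ B) :
    x 0 ∉ B ∧
    0 < ‖x 1 - PB (x 0)‖ ∧
    ‖x 1 - PB (x 0)‖ < ‖PB (x 0) - x 0‖ ∧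
    (0 < (‖x 1 - PB (x 0)‖ / ‖PB (x 0) - x 0‖) ^ 2 ∧
      (‖x 1 - PB (x 0)‖ / ‖PB (x 0) - x 0‖) ^ 2 < 1) ∧
    (∀ k, ((‖x 1 - PB (x 0)‖ / ‖PB (x 0) - x 0‖) ^ 2) ^ k * Metric.infDist (x 0) B ≤
        Metric.infDist (x k) B ∧
      0 < Metric.infDist (x k) B ∧ x k ∉ A ∩ B) :=
  alternating_projections_one_step_or_never_general A B hAconv hBconv hABne PA PB hPA hPB x hx0 hrec
    hx1
end

section
/- Let A and B be nonempty closed convex subsets of E with A ∩ B ≠ ∅. Suppose there exists c ∈ [0,1) such that for every x₀ ∈ E the alternating projections sequence x_{k+1} = P_A(P_B x_k) eventually converges R-linearly with rate c to a point of A ∩ B: there exist x̃ ∈ A ∩ B, γ > 0 and p ∈ ℕ with ‖x_k − x̃‖ ≤ γ·c^k for all k ≥ p. Then the collection {A,B} is globally subtransversal with constant 1/(1−c): dist(x, A ∩ B) ≤ (1/(1−c))·dist(x, B) for all x ∈ A. -/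
/-!
Start alternating projections at `x ∈ A`. The gaps `‖x_k - P_B x_k‖`, `‖P_B x_k - x_{k+1}‖`,
`‖x_{k+1} - P_B x_{k+1}‖`, … form a log-convex sequence: each is at most the geometric mean of
its two neighbours, by the variational inequalities of the projections. Hence so is
`d k = ‖x_k - P_B x_k‖`, and the ratios `d (k+1) / d k` increase. A ratio above `c` would make
`d k` decay more slowly than `c ^ k`, contradicting the R-linear convergence (as `x̃ ∈ B`), so
`d k ≤ c ^ k d 0`. Since `P_A` is nonexpansive, the steps satisfy `‖x_k - x_{k+1}‖ ≤ d k`, and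
summing the geometric series gives `dist(x, A ∩ B) ≤ ‖x - x̃‖ ≤ d 0 / (1 - c)`.
-/

open Metric Filter Topology
open scoped RealInnerProductSpace

section LogConvex

theorem sq_le_mul_of_interlaced {a b c u v : ℝ} (ha : 0 ≤ a) (hc : 0 ≤ c)
    (hb : b ^ 2 ≤ u * v) (hua : u ^ 2 ≤ a * b) (hvc : v ^ 2 ≤ b * c) : b ^ 2 ≤ a * c := by
  rcases eq_or_ne b 0 with rfl | hb0
  · simpa using mul_nonneg ha hc
  have : b ^ 2 * b ^ 2 ≤ b ^ 2 * (a * c) :=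
    calc b ^ 2 * b ^ 2 ≤ (u * v) ^ 2 := by
          rw [← sq]; exact pow_le_pow_left₀ (sq_nonneg b) hb 2
      _ = u ^ 2 * v ^ 2 := mul_pow u v 2
      _ ≤ (a * b) * (b * c) := mul_le_mul hua hvc (sq_nonneg v) ((sq_nonneg u).trans hua)
      _ = b ^ 2 * (a * c) := by ring
  exact le_of_mul_le_mul_left this (by positivity)

variable {d : ℕ → ℝ}

theorem mul_pow_le_of_sq_le_mul (hlc : ∀ n, d (n + 1) ^ 2 ≤ d n * d (n + 2)) (n : ℕ) :
    ∀ k, 0 < d k → 0 < d (k + 1) → d k * (d (k + 1) / d k) ^ n ≤ d (k + n) := by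
  induction n with
  | zero => simp
  | succ n ih =>
    intro k hk hk1
    have hratio : d (k + 1) / d k ≤ d (k + 2) / d (k + 1) := by
      rw [div_le_div_iff₀ hk hk1]; nlinarith [hlc k]
    have hk2 : 0 < d (k + 2) :=
      (div_pos_iff_of_pos_right hk1).mp ((div_pos hk1 hk).trans_le hratio)
    calc d k * (d (k + 1) / d k) ^ (n + 1) = d (k + 1) * (d (k + 1) / d k) ^ n := by
          rw [pow_succ', ← mul_assoc, mul_div_cancel₀ _ hk.ne']
      _ ≤ d (k + 1) * (d (k + 1 + 1) / d (k + 1)) ^ n := by gcongr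
      _ ≤ d (k + (n + 1)) := by
          rw [show k + (n + 1) = k + 1 + n by ring]; exact ih (k + 1) hk1 hk2

theorem succ_le_mul_of_sq_le_mul {c γ : ℝ} (hd : ∀ n, 0 ≤ d n)
    (hlc : ∀ n, d (n + 1) ^ 2 ≤ d n * d (n + 2)) (hc : 0 ≤ c)
    (hbound : ∀ᶠ n in atTop, d n ≤ γ * c ^ n) (k : ℕ) : d (k + 1) ≤ c * d k := by
  by_contra! hlt
  have hk1 : 0 < d (k + 1) := (mul_nonneg hc (hd k)).trans_lt hlt
  have hk : 0 < d k := by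
    by_contra! h
    nlinarith [hlc k, hd (k + 2), le_antisymm h (hd k)]
  set r := d (k + 1) / d k
  have hcr : c < r := (lt_div_iff₀ hk).mpr hlt
  have hr : 0 < r := by positivity
  have hle : ∀ᶠ n in atTop, d k ≤ γ * c ^ k * (c / r) ^ n := by
    filter_upwards [(tendsto_add_atTop_nat k).eventually hbound] with n hn
    rw [add_comm n k] at hn
    have := (mul_pow_le_of_sq_le_mul hlc n k hk hk1).trans hn
    rw [div_pow, mul_div_assoc', le_div_iff₀ (by positivity)]
    rwa [pow_add, ← mul_assoc] at this
  have hlim : Tendsto (fun n ↦ γ * c ^ k * (c / r) ^ n) atTop (𝓝 0) := by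
    simpa using (tendsto_pow_atTop_nhds_zero_of_lt_one (by positivity)
      ((div_lt_one hr).mpr hcr)).const_mul (γ * c ^ k)
  exact hk.not_ge (ge_of_tendsto hlim hle)

theorem le_mul_pow_of_sq_le_mul {c γ : ℝ} (hd : ∀ n, 0 ≤ d n)
    (hlc : ∀ n, d (n + 1) ^ 2 ≤ d n * d (n + 2)) (hc : 0 ≤ c)
    (hbound : ∀ᶠ n in atTop, d n ≤ γ * c ^ n) (k : ℕ) : d k ≤ d 0 * c ^ k := by
  induction k with
  | zero => simp
  | succ k ih =>
    calc d (k + 1) ≤ c * d k := succ_le_mul_of_sq_le_mul hd hlc hc hbound k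
      _ ≤ c * (d 0 * c ^ k) := mul_le_mul_of_nonneg_left ih hc
      _ = d 0 * c ^ (k + 1) := by ring

end LogConvex

theorem tendsto_of_eventually_norm_sub_le_geometric {F : Type*} [SeminormedAddCommGroup F]
    {x : ℕ → F} {l : F} {γ c : ℝ} (hc0 : 0 ≤ c) (hc1 : c < 1)
    (h : ∀ᶠ k in atTop, ‖x k - l‖ ≤ γ * c ^ k) : Tendsto x atTop (𝓝 l) := by
  refine tendsto_iff_norm_sub_tendsto_zero.2
    (squeeze_zero' (Eventually.of_forall fun _ ↦ norm_nonneg _) h ?_)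
  simpa using (tendsto_pow_atTop_nhds_zero_of_lt_one hc0 hc1).const_mul γ

section MetricProjection

variable {E : Type*} [NormedAddCommGroup E]

def IsMetricProjection (C : Set E) (P : E → E) : Prop :=
  ∀ y, P y ∈ C ∧ ‖y - P y‖ = infDist y C

namespace IsMetricProjection

variable {C : Set E} {P : E → E}

theorem apply_eq_self (hP : IsMetricProjection C P) {x : E} (hx : x ∈ C) : P x = x := by
  have h := (hP x).2
  rw [infDist_zero_of_mem hx, norm_eq_zero, sub_eq_zero] at h
  exact h.symm

theorem norm_sub_apply_le (hP : IsMetricProjection C P) (y : E) {b : E} (hb : b ∈ C) :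
    ‖y - P y‖ ≤ ‖y - b‖ :=
  (hP y).2 ▸ (infDist_le_dist_of_mem hb).trans_eq (dist_eq_norm y b)

end IsMetricProjection

variable [InnerProductSpace ℝ E]

theorem sq_norm_sub_le_mul_of_inner_le_zero {z y x b : E}
    (hzy : ⟪z - y, b - y⟫ ≤ 0) (hyx : ⟪y - x, z - x⟫ ≤ 0) :
    ‖y - x‖ ^ 2 ≤ ‖z - y‖ * ‖x - b‖ := by
  have hid : ⟪z - y, x - b⟫ = ‖y - x‖ ^ 2 - ⟪y - x, z - x⟫ - ⟪z - y, b - y⟫ := by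
    rw [← real_inner_self_eq_norm_sq]
    simp only [inner_sub_left, inner_sub_right, real_inner_comm]
    ring
  calc ‖y - x‖ ^ 2 ≤ ⟪z - y, x - b⟫ := by linarith
    _ ≤ ‖z - y‖ * ‖x - b‖ := real_inner_le_norm _ _

namespace IsMetricProjection

variable {C : Set E} {P : E → E}

theorem inner_sub_le_zero (hP : IsMetricProjection C P) (hC : Convex ℝ C) (y : E) {w : E}
    (hw : w ∈ C) : ⟪y - P y, w - P y⟫ ≤ 0 := by
  refine (norm_eq_iInf_iff_real_inner_le_zero hC (hP y).1).mp ?_ w hw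
  simp only [(hP y).2, infDist_eq_iInf, dist_eq_norm]

theorem norm_sub_le (hP : IsMetricProjection C P) (hC : Convex ℝ C) (u v : E) :
    ‖P u - P v‖ ≤ ‖u - v‖ := by
  have hu := hP.inner_sub_le_zero hC u (hP v).1
  have hv := hP.inner_sub_le_zero hC v (hP u).1
  have hid : ⟪u - v, P u - P v⟫
      = ‖P u - P v‖ ^ 2 - ⟪u - P u, P v - P u⟫ - ⟪v - P v, P u - P v⟫ := by
    rw [← real_inner_self_eq_norm_sq]
    simp only [inner_sub_left, inner_sub_right, real_inner_comm]
    ring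
  have hsq : ‖P u - P v‖ ^ 2 ≤ ‖u - v‖ * ‖P u - P v‖ := by
    linarith [real_inner_le_norm (u - v) (P u - P v)]
  nlinarith [norm_nonneg (P u - P v), norm_nonneg (u - v)]

end IsMetricProjection

theorem sq_norm_gap_le_mul {C D : Set E} {PC PD : E → E} (hC : Convex ℝ C) (hD : Convex ℝ D)
    (hPC : IsMetricProjection C PC) (hPD : IsMetricProjection D PD) {z : E} (hz : z ∈ C) :
    ‖PD z - PC (PD z)‖ ^ 2 ≤ ‖z - PD z‖ * ‖PC (PD z) - PD (PC (PD z))‖ :=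
  sq_norm_sub_le_mul_of_inner_le_zero
    (hPD.inner_sub_le_zero hD z (hPD _).1) (hPC.inner_sub_le_zero hC (PD z) hz)

theorem sq_norm_sub_proj_le_mul_of_alternating {A B : Set E} {PA PB : E → E}
    (hA : Convex ℝ A) (hB : Convex ℝ B)
    (hPA : IsMetricProjection A PA) (hPB : IsMetricProjection B PB)
    {xs : ℕ → E} (hxs : ∀ k, xs (k + 1) = PA (PB (xs k))) (hmem : ∀ k, xs k ∈ A) (k : ℕ) :
    ‖xs (k + 1) - PB (xs (k + 1))‖ ^ 2 ≤ ‖xs k - PB (xs k)‖ * ‖xs (k + 2) - PB (xs (k + 2))‖ := by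
  refine sq_le_mul_of_interlaced (norm_nonneg _) (norm_nonneg _)
    (u := ‖PB (xs k) - xs (k + 1)‖) (v := ‖PB (xs (k + 1)) - xs (k + 2)‖) ?_ ?_ ?_
  · simpa only [hxs] using sq_norm_gap_le_mul hB hA hPB hPA (hPB (xs k)).1
  · simpa only [hxs] using sq_norm_gap_le_mul hA hB hPA hPB (hmem k)
  · simpa only [hxs] using sq_norm_gap_le_mul hA hB hPA hPB (hmem (k + 1))

theorem dist_succ_le_of_alternating {A : Set E} {PA PB : E → E} (hA : Convex ℝ A)
    (hPA : IsMetricProjection A PA) {xs : ℕ → E} (hxs : ∀ k, xs (k + 1) = PA (PB (xs k)))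
    (hmem : ∀ k, xs k ∈ A) (k : ℕ) : dist (xs k) (xs (k + 1)) ≤ ‖xs k - PB (xs k)‖ :=
  calc dist (xs k) (xs (k + 1)) = ‖PA (xs k) - PA (PB (xs k))‖ := by
        rw [hPA.apply_eq_self (hmem k), hxs, dist_eq_norm]
    _ ≤ ‖xs k - PB (xs k)‖ := hPA.norm_sub_le hA _ _

end MetricProjection

theorem global_subtransversality_necessary_for_eventual_Rlinear_convergence_convex_general
    {E : Type*} [NormedAddCommGroup E] [InnerProductSpace ℝ E]
    (A B : Set E) (hAconv : Convex ℝ A)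
    (hBconv : Convex ℝ B)
    (PA PB : E → E)
    (hPA : ∀ y, PA y ∈ A ∧ ‖y - PA y‖ = Metric.infDist y A)
    (hPB : ∀ y, PB y ∈ B ∧ ‖y - PB y‖ = Metric.infDist y B)
    (c : ℝ) (hc0 : 0 ≤ c) (hc1 : c < 1)
    (hconv : ∀ x : ℕ → E, (∀ k, x (k + 1) = PA (PB (x k))) →
      ∃ xlim ∈ A ∩ B, ∃ γ > (0 : ℝ), ∃ p : ℕ, ∀ k ≥ p, ‖x k - xlim‖ ≤ γ * c ^ k) :
    ∀ x ∈ A, Metric.infDist x (A ∩ B) ≤ (1 / (1 - c)) * Metric.infDist x B := by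
  intro x hxA
  replace hPA : IsMetricProjection A PA := hPA
  replace hPB : IsMetricProjection B PB := hPB
  set xs : ℕ → E := fun k ↦ (PA ∘ PB)^[k] x
  have hxs : ∀ k, xs (k + 1) = PA (PB (xs k)) := fun k ↦ Function.iterate_succ_apply' _ k x
  have hmem : ∀ k, xs k ∈ A
    | 0 => hxA
    | k + 1 => hxs k ▸ (hPA _).1
  obtain ⟨xlim, hxlim, γ, -, p, hbound⟩ := hconv xs hxs
  have hbound' : ∀ᶠ k in atTop, ‖xs k - xlim‖ ≤ γ * c ^ k := eventually_atTop.2 ⟨p, hbound⟩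
  set d : ℕ → ℝ := fun k ↦ ‖xs k - PB (xs k)‖
  have hgeom : ∀ k, d k ≤ d 0 * c ^ k :=
    le_mul_pow_of_sq_le_mul (fun _ ↦ norm_nonneg _)
      (sq_norm_sub_proj_le_mul_of_alternating hAconv hBconv hPA hPB hxs hmem) hc0
      (hbound'.mono fun k hk ↦ (hPB.norm_sub_apply_le _ hxlim.2).trans hk)
  have hstep : ∀ k, dist (xs k) (xs (k + 1)) ≤ d 0 * c ^ k := fun k ↦
    (dist_succ_le_of_alternating hAconv hPA hxs hmem k).trans (hgeom k)
  calc infDist x (A ∩ B) ≤ dist (xs 0) xlim := infDist_le_dist_of_mem hxlim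
    _ ≤ d 0 / (1 - c) := dist_le_of_le_geometric_of_tendsto₀ c (d 0) hc1 hstep
        (tendsto_of_eventually_norm_sub_le_geometric hc0 hc1 hbound')
    _ = 1 / (1 - c) * infDist x B := by rw [← (hPB x).2, one_div_mul_eq_div]; rfl

/-- If every alternating projections sequence between the nonempty closed
convex sets `A`, `B` (with `A ∩ B ≠ ∅`) eventually converges R-linearly with rate `c` to a
point of `A ∩ B`, then `{A,B}` is globally subtransversal with constant `1/(1−c)`:
`dist(x, A ∩ B) ≤ (1/(1−c))·dist(x, B)` for all `x ∈ A`. -/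
theorem global_subtransversality_necessary_for_eventual_Rlinear_convergence_convex
    {E : Type*} [NormedAddCommGroup E] [InnerProductSpace ℝ E] [FiniteDimensional ℝ E]
    (A B : Set E) (hAne : A.Nonempty) (hAc : IsClosed A) (hAconv : Convex ℝ A)
    (hBne : B.Nonempty) (hBc : IsClosed B) (hBconv : Convex ℝ B)
    (hABne : (A ∩ B).Nonempty)
    (PA PB : E → E)
    (hPA : ∀ y, PA y ∈ A ∧ ‖y - PA y‖ = Metric.infDist y A)
    (hPB : ∀ y, PB y ∈ B ∧ ‖y - PB y‖ = Metric.infDist y B)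
    (c : ℝ) (hc0 : 0 ≤ c) (hc1 : c < 1)
    (hconv : ∀ x : ℕ → E, (∀ k, x (k + 1) = PA (PB (x k))) →
      ∃ xlim ∈ A ∩ B, ∃ γ > (0 : ℝ), ∃ p : ℕ, ∀ k ≥ p, ‖x k - xlim‖ ≤ γ * c ^ k) :
    ∀ x ∈ A, Metric.infDist x (A ∩ B) ≤ (1 / (1 - c)) * Metric.infDist x B :=
  global_subtransversality_necessary_for_eventual_Rlinear_convergence_convex_general A B hAconv
    hBconv PA PB hPA hPB c hc0 hc1 hconv
end

section
/- Let A and B be nonempty closed convex subsets of E with A ∩ B ≠ ∅. Then the following are equivalent: (i) there exists κ < ∞ such that dist(x, A ∩ B) ≤ κ·dist(x, B) for all x ∈ A (global subtransversality); (ii) there exists κ̄ < ∞ such that for every x̄ in the boundary (frontier) of A ∩ B there is δ > 0 with dist(x, A ∩ B) ≤ κ̄·dist(x, B) for all x ∈ A ∩ B_δ(x̄). Moreover, (i) implies (ii) with κ̄ = κ, and (ii) implies (i) with κ = κ̄². -/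
/-!
Let `x ∈ A \ B` and let `p` be a nearest point of `A ∩ B` to `x`; it lies on the frontier of
`A ∩ B`. The points `y = p + t • (x - p)` with small `t > 0` lie in `A` near `p`; since `p` is
nearest, `t · d(x, A ∩ B) ≤ d(y, A ∩ B)`, and since `B` is convex and contains `p`,
`d(y, B) ≤ t · d(x, B)`. The estimate at `y` thus transfers to `x` with the same constant `κ`,
and `κ` may be replaced by `κ²` because `d(x, B) ≤ d(x, A ∩ B)` forces `κ ≥ 1` once `x ∉ B`.
-/

open Metric Filter Topology AffineMap

theorem le_sq_mul_of_le_mul {a b κ : ℝ} (hb : 0 ≤ b) (hba : b ≤ a) (h : a ≤ κ * b) :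
    a ≤ κ ^ 2 * b := by
  nlinarith [mul_nonneg (sq_nonneg (κ - 1)) hb]

section

variable {E : Type*} [NormedAddCommGroup E] [NormedSpace ℝ E]

theorem exists_lineMap_mem_of_mem_nhds {p : E} {U : Set E} (hU : U ∈ 𝓝 p) (x : E) :
    ∃ t : ℝ, 0 < t ∧ t ≤ 1 ∧ lineMap p x t ∈ U := by
  have hmem : ∀ᶠ t : ℝ in 𝓝[>] 0, lineMap p x t ∈ U :=
    nhdsWithin_le_nhds <|
      (lineMap_continuous.tendsto' 0 p (lineMap_apply_zero p x)).eventually_mem hU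
  have hle : ∀ᶠ t : ℝ in 𝓝[>] 0, t ≤ 1 :=
    nhdsWithin_le_nhds <| eventually_le_nhds one_pos
  obtain ⟨t, ⟨htU, ht₁⟩, ht₀⟩ := ((hmem.and hle).and self_mem_nhdsWithin).exists
  exact ⟨t, ht₀, ht₁, htU⟩

theorem mul_infDist_le_infDist_lineMap {s : Set E} {x p : E} (hp : dist x p = infDist x s)
    {t : ℝ} (ht₁ : t ≤ 1) : t * infDist x s ≤ infDist (lineMap p x t) s := by
  have hdist : dist x (lineMap p x t) = (1 - t) * infDist x s := by
    rw [dist_comm, dist_lineMap_right, Real.norm_of_nonneg (by linarith), dist_comm, hp]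
  linarith [infDist_le_infDist_add_dist (x := x) (y := lineMap p x t) (s := s)]

theorem infDist_lineMap_le_mul {s : Set E} (hs : Convex ℝ s) {p : E} (hp : p ∈ s) (x : E)
    {t : ℝ} (ht₀ : 0 ≤ t) (ht₁ : t ≤ 1) : infDist (lineMap p x t) s ≤ t * infDist x s := by
  rcases ht₀.eq_or_lt with rfl | ht₀
  · simp [infDist_zero_of_mem hp]
  rw [← div_le_iff₀' ht₀, le_infDist ⟨p, hp⟩]
  intro b hb
  rw [div_le_iff₀' ht₀]
  calc infDist (lineMap p x t) s ≤ dist (lineMap p x t) (lineMap p b t) :=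
        infDist_le_dist_of_mem (hs.lineMap_mem hp hb ⟨ht₀.le, ht₁⟩)
    _ = t * dist x b := by
        rw [lineMap_apply_module, lineMap_apply_module, dist_add_left, dist_smul₀,
          Real.norm_of_nonneg ht₀.le]

theorem mem_frontier_of_dist_eq_infDist {s : Set E} {x p : E} (hx : 0 < infDist x s)
    (hps : p ∈ s) (hp : dist x p = infDist x s) : p ∈ frontier s := by
  refine ⟨subset_closure hps, fun hint => ?_⟩
  obtain ⟨t, ht₀, ht₁, hts⟩ := exists_lineMap_mem_of_mem_nhds (isOpen_interior.mem_nhds hint) x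
  have hlow := mul_infDist_le_infDist_lineMap hp ht₁
  rw [infDist_zero_of_mem (interior_subset hts)] at hlow
  exact (mul_pos ht₀ hx).not_ge hlow

theorem infDist_inter_le_of_forall_mem_ball {A B : Set E} (hA : Convex ℝ A) (hB : Convex ℝ B)
    {x p : E} (hxA : x ∈ A) (hx : 0 < infDist x (A ∩ B)) (hpAB : p ∈ A ∩ B)
    (hp : dist x p = infDist x (A ∩ B)) {κ δ : ℝ} (hδ : 0 < δ)
    (hloc : ∀ y ∈ A ∩ ball p δ, infDist y (A ∩ B) ≤ κ * infDist y B) :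
    infDist x (A ∩ B) ≤ κ * infDist x B := by
  obtain ⟨t, ht₀, ht₁, hball⟩ := exists_lineMap_mem_of_mem_nhds (ball_mem_nhds p hδ) x
  have hyA : lineMap p x t ∈ A := hA.lineMap_mem hpAB.1 hxA ⟨ht₀.le, ht₁⟩
  have hlow : t * infDist x (A ∩ B) ≤ κ * infDist (lineMap p x t) B :=
    (mul_infDist_le_infDist_lineMap hp ht₁).trans (hloc _ ⟨hyA, hball⟩)
  have hκ : 0 ≤ κ := (pos_of_mul_pos_left ((mul_pos ht₀ hx).trans_le hlow) infDist_nonneg).le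
  refine le_of_mul_le_mul_left ?_ ht₀
  calc t * infDist x (A ∩ B) ≤ κ * infDist (lineMap p x t) B := hlow
    _ ≤ κ * (t * infDist x B) := by gcongr; exact infDist_lineMap_le_mul hB hpAB.2 x ht₀.le ht₁
    _ = t * (κ * infDist x B) := by ring

theorem infDist_inter_le_of_forall_frontier [ProperSpace E] {A B : Set E} (hAc : IsClosed A)
    (hA : Convex ℝ A) (hBc : IsClosed B) (hB : Convex ℝ B) (hAB : (A ∩ B).Nonempty) {κ : ℝ}
    (h : ∀ p ∈ frontier (A ∩ B), ∃ δ > 0,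
      ∀ y ∈ A ∩ ball p δ, infDist y (A ∩ B) ≤ κ * infDist y B)
    {x : E} (hxA : x ∈ A) : infDist x (A ∩ B) ≤ κ * infDist x B := by
  by_cases hxAB : x ∈ A ∩ B
  · simp [infDist_zero_of_mem hxAB, infDist_zero_of_mem hxAB.2]
  have hx : 0 < infDist x (A ∩ B) := ((hAc.inter hBc).notMem_iff_infDist_pos hAB).1 hxAB
  obtain ⟨p, hpAB, hp⟩ := (hAc.inter hBc).exists_infDist_eq_dist hAB x
  obtain ⟨δ, hδ, hloc⟩ := h p (mem_frontier_of_dist_eq_infDist hx hpAB hp.symm)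
  exact infDist_inter_le_of_forall_mem_ball hA hB hxA hx hpAB hp.symm hδ hloc

end

theorem global_subtransversality_iff_boundary_subtransversality_general
    {E : Type*} [NormedAddCommGroup E] [InnerProductSpace ℝ E] [FiniteDimensional ℝ E]
    (A B : Set E) (hAc : IsClosed A) (hAconv : Convex ℝ A)
    (hBc : IsClosed B) (hBconv : Convex ℝ B)
    (hABne : (A ∩ B).Nonempty) :
    (∀ κ : ℝ, (∀ x ∈ A, Metric.infDist x (A ∩ B) ≤ κ * Metric.infDist x B) →
      ∀ xbar ∈ frontier (A ∩ B), ∃ δ > (0 : ℝ), ∀ x ∈ A ∩ Metric.ball xbar δ,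
        Metric.infDist x (A ∩ B) ≤ κ * Metric.infDist x B) ∧
    (∀ κ' : ℝ, (∀ xbar ∈ frontier (A ∩ B), ∃ δ > (0 : ℝ),
        ∀ x ∈ A ∩ Metric.ball xbar δ,
          Metric.infDist x (A ∩ B) ≤ κ' * Metric.infDist x B) →
      ∀ x ∈ A, Metric.infDist x (A ∩ B) ≤ κ' ^ 2 * Metric.infDist x B) := by
  refine ⟨fun κ h _ _ => ⟨1, one_pos, fun x hx => h x hx.1⟩, fun κ h x hxA => ?_⟩
  exact le_sq_mul_of_le_mul infDist_nonneg
    (infDist_le_infDist_of_subset Set.inter_subset_right hABne)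
    (infDist_inter_le_of_forall_frontier hAc hAconv hBc hBconv hABne h hxA)

/-- For nonempty closed convex sets `A`, `B` with `A ∩ B ≠ ∅`: global
subtransversality (`dist(x, A∩B) ≤ κ·dist(x,B)` for all `x ∈ A`) is equivalent to local
subtransversality at every point of the boundary of `A ∩ B` with uniformly bounded
constants. Quantitatively: (i) implies (ii) with the same constant `κ̄ = κ`, and (ii)
implies (i) with `κ = κ̄²`. -/
theorem global_subtransversality_iff_boundary_subtransversality
    {E : Type*} [NormedAddCommGroup E] [InnerProductSpace ℝ E] [FiniteDimensional ℝ E]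
    (A B : Set E) (hAne : A.Nonempty) (hAc : IsClosed A) (hAconv : Convex ℝ A)
    (hBne : B.Nonempty) (hBc : IsClosed B) (hBconv : Convex ℝ B)
    (hABne : (A ∩ B).Nonempty) :
    (∀ κ : ℝ, (∀ x ∈ A, Metric.infDist x (A ∩ B) ≤ κ * Metric.infDist x B) →
      ∀ xbar ∈ frontier (A ∩ B), ∃ δ > (0 : ℝ), ∀ x ∈ A ∩ Metric.ball xbar δ,
        Metric.infDist x (A ∩ B) ≤ κ * Metric.infDist x B) ∧
    (∀ κ' : ℝ, (∀ xbar ∈ frontier (A ∩ B), ∃ δ > (0 : ℝ),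
        ∀ x ∈ A ∩ Metric.ball xbar δ,
          Metric.infDist x (A ∩ B) ≤ κ' * Metric.infDist x B) →
      ∀ x ∈ A, Metric.infDist x (A ∩ B) ≤ κ' ^ 2 * Metric.infDist x B) :=
  global_subtransversality_iff_boundary_subtransversality_general A B hAc hAconv hBc hBconv hABne
end

section
/- Let A and B be nonempty closed convex subsets of E with A ∩ B ≠ ∅. Then for every a ∈ A and every x ∈ A ∩ B, ‖P_B a − x‖ · ‖P_B a − a‖ ≥ ‖a − x‖ · ‖P_A(P_B a) − P_B a‖. -/
/-!
Put `b = P_B a`. The segment `[a, x]` lies in `A`, so `‖P_A b - b‖ = dist(b, A) ≤ dist(b, [a, x])`.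
It remains to see that in any triangle `a x b` the distance from `b`
to the side `[a, x]` times `‖a - x‖` is at most `‖b - x‖ * ‖b - a‖`. When the foot of the
perpendicular from `b` falls on the side this is twice the area of the triangle computed in
two ways; otherwise the angle at `a` or at `x` is obtuse, and the nearest endpoint does the job.
-/

open Metric RealInnerProductSpace

section Triangle

variable {F : Type*} [NormedAddCommGroup F] [InnerProductSpace ℝ F]

theorem norm_le_norm_sub_of_inner_nonpos {u v : F} (h : ⟪u, v⟫ ≤ 0) : ‖v‖ ≤ ‖u - v‖ := by
  refine le_of_sq_le_sq ?_ (norm_nonneg _)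
  rw [norm_sub_sq_real]
  nlinarith [sq_nonneg ‖u‖]

/-- `(⟪u, v⟫ / ‖v‖ ^ 2) • v` is the orthogonal projection of `u` onto `ℝ ∙ v`. -/
theorem norm_mul_norm_sub_inner_div_smul_le (u v : F) :
    ‖v‖ * ‖u - (⟪u, v⟫ / ‖v‖ ^ 2) • v‖ ≤ ‖u - v‖ * ‖u‖ := by
  rcases eq_or_ne v 0 with rfl | hv
  · simp [mul_nonneg]
  set s := ⟪u, v⟫
  have hv2 : ‖v‖ ^ 2 ≠ 0 := by positivity
  have lagrange : (‖v‖ * ‖u - (s / ‖v‖ ^ 2) • v‖) ^ 2 = ‖v‖ ^ 2 * ‖u‖ ^ 2 - s ^ 2 := by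
    rw [mul_pow, norm_sub_sq_real, real_inner_smul_right, norm_smul, Real.norm_eq_abs, mul_pow,
      sq_abs]
    field_simp
    ring
  refine le_of_sq_le_sq ?_ (by positivity)
  rw [lagrange, mul_pow, norm_sub_sq_real]
  nlinarith [sq_nonneg (‖u‖ ^ 2 - s)]

theorem exists_mem_segment_norm_sub_mul_norm_sub_le (a x b : F) :
    ∃ c ∈ segment ℝ a x, ‖a - x‖ * ‖b - c‖ ≤ ‖b - x‖ * ‖b - a‖ := by
  by_cases obtuse_a : ⟪b - a, x - a⟫ ≤ 0
  · refine ⟨a, left_mem_segment ℝ a x, ?_⟩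
    have := norm_le_norm_sub_of_inner_nonpos obtuse_a
    rw [sub_sub_sub_cancel_right, norm_sub_rev] at this
    gcongr
  by_cases obtuse_x : ⟪b - x, a - x⟫ ≤ 0
  · refine ⟨x, right_mem_segment ℝ a x, ?_⟩
    have := norm_le_norm_sub_of_inner_nonpos obtuse_x
    rw [sub_sub_sub_cancel_right] at this
    rw [mul_comm]
    gcongr
  push Not at obtuse_a obtuse_x
  set t := ⟪b - a, x - a⟫ / ‖x - a‖ ^ 2
  have inner_add : ⟪b - a, x - a⟫ + ⟪b - x, a - x⟫ = ‖x - a‖ ^ 2 := by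
    rw [← neg_sub x a, inner_neg_right, ← sub_eq_add_neg, ← inner_sub_left,
      sub_sub_sub_cancel_left, real_inner_self_eq_norm_sq]
  have hxa : 0 < ‖x - a‖ ^ 2 := by linarith
  refine ⟨a + t • (x - a), ?_, ?_⟩
  · rw [segment_eq_image']
    refine ⟨t, ⟨by positivity, (div_le_one hxa).2 (by linarith)⟩, rfl⟩
  · have := norm_mul_norm_sub_inner_div_smul_le (b - a) (x - a)
    rw [sub_sub_sub_cancel_right] at this
    rwa [← sub_sub, norm_sub_rev a x]

theorem dist_mul_infDist_segment_le (a x b : F) :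
    dist a x * infDist b (segment ℝ a x) ≤ dist b x * dist b a := by
  obtain ⟨c, hc, hle⟩ := exists_mem_segment_norm_sub_mul_norm_sub_le a x b
  calc dist a x * infDist b (segment ℝ a x) ≤ ‖a - x‖ * ‖b - c‖ := by
        rw [dist_eq_norm, ← dist_eq_norm b c]
        gcongr
        exact infDist_le_dist_of_mem hc
    _ ≤ dist b x * dist b a := by rwa [dist_eq_norm, dist_eq_norm]

end Triangle

theorem projection_product_inequality_convex_general
    {E : Type*} [NormedAddCommGroup E] [InnerProductSpace ℝ E]
    (A B : Set E) (hAconv : Convex ℝ A)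
    (PA PB : E → E)
    (hPA : ∀ y, PA y ∈ A ∧ ‖y - PA y‖ = Metric.infDist y A) :
    ∀ a ∈ A, ∀ x ∈ A ∩ B,
      ‖PB a - x‖ * ‖PB a - a‖ ≥ ‖a - x‖ * ‖PA (PB a) - PB a‖ := by
  intro a ha x hx
  set b := PB a
  have segment_subset : segment ℝ a x ⊆ A := hAconv.segment_subset ha hx.1
  calc ‖a - x‖ * ‖PA b - b‖ = dist a x * infDist b A := by
        rw [← dist_eq_norm, norm_sub_rev, (hPA b).2]
    _ ≤ dist a x * infDist b (segment ℝ a x) := by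
        gcongr
        exact infDist_le_infDist_of_subset segment_subset ⟨a, left_mem_segment ℝ a x⟩
    _ ≤ dist b x * dist b a := dist_mul_infDist_segment_le a x b
    _ = ‖b - x‖ * ‖b - a‖ := by rw [dist_eq_norm, dist_eq_norm]

/-- For nonempty closed convex sets `A`, `B` with `A ∩ B ≠ ∅`, for every
`a ∈ A` and `x ∈ A ∩ B`,
`‖PB a − x‖·‖PB a − a‖ ≥ ‖a − x‖·‖PA(PB a) − PB a‖`. -/
theorem projection_product_inequality_convex
    {E : Type*} [NormedAddCommGroup E] [InnerProductSpace ℝ E] [FiniteDimensional ℝ E]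
    (A B : Set E) (hAne : A.Nonempty) (hAc : IsClosed A) (hAconv : Convex ℝ A)
    (hBne : B.Nonempty) (hBc : IsClosed B) (hBconv : Convex ℝ B)
    (hABne : (A ∩ B).Nonempty)
    (PA PB : E → E)
    (hPA : ∀ y, PA y ∈ A ∧ ‖y - PA y‖ = Metric.infDist y A)
    (hPB : ∀ y, PB y ∈ B ∧ ‖y - PB y‖ = Metric.infDist y B) :
    ∀ a ∈ A, ∀ x ∈ A ∩ B,
      ‖PB a - x‖ * ‖PB a - a‖ ≥ ‖a - x‖ * ‖PA (PB a) - PB a‖ :=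
  projection_product_inequality_convex_general A B hAconv PA PB hPA
end
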